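/- arXiv:2511.01412 — 2 statements merged into one kernel-verified Lean document; each statement's English description precedes it below -/
import Mathlib

section
/- Proposition 1 (effect bounds): suppose X = 1_B is the indicator of an event B and ψ := E[g_P(1−g_P)] > 0. Define τ := E[α_P²], s_T := E[(g_c − g_P)²]/ψ, and s_A := 1 − E[α_P²]/E[α_c²]. If v ≥ 0 satisfies s_T · s_A/(1 − s_A) ≤ v, then θ_P − √(v·ψ·τ) ≤ θ_c ≤ θ_P + √(v·ψ·τ). -/
open MeasureTheory ProbabilityTheory

private lemma int_mul_condexp {Ω : Type*} {m m0 : MeasurableSpace Ω} (hm : m ≤ m0)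
    (μ : Measure Ω) [IsFiniteMeasure μ] {f g : Ω → ℝ}
    (hf : StronglyMeasurable[m] f) (hfg : Integrable (fun ω => f ω * g ω) μ)
    (hg : Integrable g μ) :
    ∫ ω, f ω * (μ[g|m]) ω ∂μ = ∫ ω, f ω * g ω ∂μ := by
  have h1 : μ[f * g|m] =ᵐ[μ] f * μ[g|m] := condExp_mul_of_stronglyMeasurable_left hf hfg hg
  have h2 : ∫ ω, (μ[f * g|m]) ω ∂μ = ∫ ω, (f * g) ω ∂μ := integral_condExp hm
  calc ∫ ω, f ω * (μ[g|m]) ω ∂μ = ∫ ω, (μ[f * g|m]) ω ∂μ := (integral_congr_ae h1).symm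
    _ = ∫ ω, f ω * g ω ∂μ := h2

private lemma int_mul_version {Ω : Type*} {m m0 : MeasurableSpace Ω} (hm : m ≤ m0)
    (μ : Measure Ω) [IsFiniteMeasure μ] {f g π : Ω → ℝ} (hπ : π =ᵐ[μ] μ[g|m])
    (hf : StronglyMeasurable[m] f) (hfg : Integrable (fun ω => f ω * g ω) μ)
    (hg : Integrable g μ) :
    ∫ ω, f ω * g ω ∂μ = ∫ ω, f ω * π ω ∂μ := by
  rw [← int_mul_condexp hm μ hf hfg hg]
  refine integral_congr_ae ?_
  filter_upwards [hπ] with ω h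
  rw [h]

private lemma cs_int {Ω : Type*} {m0 : MeasurableSpace Ω} (μ : Measure Ω) {u w : Ω → ℝ}
    (hu2 : Integrable (fun ω => u ω ^ 2) μ) (hw2 : Integrable (fun ω => w ω ^ 2) μ)
    (huw : Integrable (fun ω => u ω * w ω) μ) :
    (∫ ω, u ω * w ω ∂μ) ^ 2 ≤ (∫ ω, u ω ^ 2 ∂μ) * (∫ ω, w ω ^ 2 ∂μ) := by
  set a := ∫ ω, u ω ^ 2 ∂μ with ha'
  set b := ∫ ω, u ω * w ω ∂μ with hb'
  set c := ∫ ω, w ω ^ 2 ∂μ with hc'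
  have ha : 0 ≤ a := integral_nonneg fun ω => sq_nonneg _
  have hc : 0 ≤ c := integral_nonneg fun ω => sq_nonneg _
  have key : ∀ t : ℝ, 0 ≤ a * t ^ 2 + 2 * t * b + c := by
    intro t
    have e1 : ∫ ω, (t * u ω + w ω) ^ 2 ∂μ = a * t ^ 2 + 2 * t * b + c := by
      have hfe : (fun ω => (t * u ω + w ω) ^ 2)
          = fun ω => (t ^ 2) * u ω ^ 2 + (2 * t) * (u ω * w ω) + w ω ^ 2 := by
        funext ω; ring
      have i1 : Integrable (fun ω => t ^ 2 * u ω ^ 2) μ := hu2.const_mul _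
      have i2 : Integrable (fun ω => 2 * t * (u ω * w ω)) μ := huw.const_mul _
      have i12 : Integrable (fun ω => t ^ 2 * u ω ^ 2 + 2 * t * (u ω * w ω)) μ := i1.add i2
      rw [hfe, integral_add i12 hw2, integral_add i1 i2,
        integral_const_mul, integral_const_mul]
      ring
    have e2 : 0 ≤ ∫ ω, (t * u ω + w ω) ^ 2 ∂μ := integral_nonneg fun ω => sq_nonneg _
    linarith [e1 ▸ e2]
  rcases ha.eq_or_lt with h0 | h0
  · have hb : b = 0 := by
      by_contra hb
      rcases lt_or_gt_of_ne hb with hbneg | hbpos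
      · have := key ((c + 1) / (2 * (-b)))
        rw [← h0] at this
        have h2 : 2 * ((c + 1) / (2 * (-b))) * b = -(c + 1) := by
          field_simp
        nlinarith
      · have := key (-((c + 1) / (2 * b)))
        rw [← h0] at this
        have h2 : 2 * (-((c + 1) / (2 * b))) * b = -(c + 1) := by
          field_simp
        nlinarith
    rw [hb, ← h0]
    norm_num
  · have h1 := key (-(b / a))
    have h2 : a * (-(b / a)) ^ 2 + 2 * (-(b / a)) * b + c = c - b ^ 2 / a := by
      field_simp
      ring
    rw [h2] at h1
    have h3 : b ^ 2 / a ≤ c := by linarith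
    calc b ^ 2 = b ^ 2 / a * a := by field_simp
      _ ≤ c * a := mul_le_mul_of_nonneg_right h3 h0.le
      _ = a * c := mul_comm _ _

private lemma int_A_mul {Ω : Type*} {m m0 : MeasurableSpace Ω} (hm : m ≤ m0)
    (μ : Measure Ω) [IsFiniteMeasure μ] {A π f : Ω → ℝ}
    (hπ : π =ᵐ[μ] μ[A|m]) (hAint : Integrable A μ)
    (hf : StronglyMeasurable[m] f) (hfA : Integrable (fun ω => f ω * A ω) μ) :
    ∫ ω, f ω * A ω ∂μ = ∫ ω, f ω * π ω ∂μ :=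
  int_mul_version hm μ hπ hf hfA hAint

private lemma int_oneSubA_mul {Ω : Type*} {m m0 : MeasurableSpace Ω} (hm : m ≤ m0)
    (μ : Measure Ω) [IsFiniteMeasure μ] {A π f : Ω → ℝ}
    (hπ : π =ᵐ[μ] μ[A|m]) (hAint : Integrable A μ)
    (hf : StronglyMeasurable[m] f) (hfint : Integrable f μ)
    (hfA : Integrable (fun ω => f ω * A ω) μ)
    (hfπ : Integrable (fun ω => f ω * π ω) μ) :
    ∫ ω, f ω * (1 - A ω) ∂μ = ∫ ω, f ω * (1 - π ω) ∂μ := by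
  have e1 : (fun ω => f ω * (1 - A ω)) = fun ω => f ω - f ω * A ω := by
    funext ω; ring
  have e2 : (fun ω => f ω * (1 - π ω)) = fun ω => f ω - f ω * π ω := by
    funext ω; ring
  rw [e1, e2, integral_sub hfint hfA, integral_sub hfint hfπ,
    int_A_mul hm μ hπ hAint hf hfA]

private lemma frac_lemma {t a s : ℝ} (ht : 0 < t) (ha : 0 ≤ a) (hs : s = 1 - t / (t + a)) :
    s / (1 - s) = a / t := by
  have h1 : t + a ≠ 0 := by positivity
  have h2 : t ≠ 0 := ht.ne'
  have hs' : s = a / (t + a) := by rw [hs]; field_simp; ring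
  have h1s : 1 - s = t / (t + a) := by rw [hs]; ring
  rw [h1s, hs']
  rw [div_div_div_cancel_right₀]
  exact h1

private lemma key_lemma {Ig a ψ τ v : ℝ} (hψ : 0 < ψ) (hτ : 0 < τ)
    (h : Ig / ψ * (a / τ) ≤ v) : Ig * a ≤ v * ψ * τ := by
  have e : Ig * a = Ig / ψ * (a / τ) * (ψ * τ) := by field_simp
  rw [e]
  calc Ig / ψ * (a / τ) * (ψ * τ) ≤ v * (ψ * τ) :=
        mul_le_mul_of_nonneg_right h (by positivity)
    _ = v * ψ * τ := by ring

set_option maxHeartbeats 2000000 in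
/-- Proposition 1 (effect bounds): for `X = 1_B` the indicator of an event `B` and
`ψ := E[g_P(1−g_P)] > 0`, with `τ := E[α_P²]`, `s_T := E[(g_c − g_P)²]/ψ` and
`s_A := 1 − E[α_P²]/E[α_c²]`, if `v ≥ 0` satisfies `s_T·s_A/(1 − s_A) ≤ v`, then
`θ_P − √(v·ψ·τ) ≤ θ_c ≤ θ_P + √(v·ψ·τ)`. -/
theorem prop1_effect_bounds
    {Ω : Type*} (𝒢 ℋ : MeasurableSpace Ω) {m0 : MeasurableSpace Ω} (P : Measure Ω) [IsProbabilityMeasure P]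
    (h𝒢ℋ : 𝒢 ≤ ℋ) (hℋ : ℋ ≤ m0)
    (A : Ω → ℝ) (hA : Measurable A) (hA01 : ∀ ω, A ω = 0 ∨ A ω = 1)
    (κ : ℝ) (hκ0 : 0 < κ) (hκhalf : κ < 1 / 2)
    (piP pic : Ω → ℝ)
    (hpiPmeas : Measurable[𝒢] piP) (hpicmeas : Measurable[ℋ] pic)
    (hpiPver : piP =ᵐ[P] P[A | 𝒢]) (hpicver : pic =ᵐ[P] P[A | ℋ])
    (hpiPlb : ∀ ω, κ ≤ piP ω) (hpiPub : ∀ ω, piP ω ≤ 1 - κ)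
    (hpiclb : ∀ ω, κ ≤ pic ω) (hpicub : ∀ ω, pic ω ≤ 1 - κ)
    (αP αc : Ω → ℝ)
    (hαP : αP = fun ω => A ω / piP ω - (1 - A ω) / (1 - piP ω))
    (hαc : αc = fun ω => A ω / pic ω - (1 - A ω) / (1 - pic ω))
    (B : Set Ω) (hB : MeasurableSet B)
    (X : Ω → ℝ) (hX : X = Set.indicator B fun _ => (1 : ℝ))
    (gP0 gP1 gc0 gc1 : Ω → ℝ)
    (hgP0meas : Measurable[𝒢] gP0) (hgP1meas : Measurable[𝒢] gP1)
    (hgc0meas : Measurable[ℋ] gc0) (hgc1meas : Measurable[ℋ] gc1)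
    (hgP0int : Integrable gP0 P) (hgP1int : Integrable gP1 P)
    (hgc0int : Integrable gc0 P) (hgc1int : Integrable gc1 P)
    (gP gc : Ω → ℝ)
    (hgP : gP = fun ω => A ω * gP1 ω + (1 - A ω) * gP0 ω)
    (hgc : gc = fun ω => A ω * gc1 ω + (1 - A ω) * gc0 ω)
    (hgPver : gP =ᵐ[P] P[X | 𝒢 ⊔ MeasurableSpace.comap A inferInstance])
    (hgcver : gc =ᵐ[P] P[X | ℋ ⊔ MeasurableSpace.comap A inferInstance])
    (θP θc : ℝ)
    (hθP : θP = ∫ ω, (gP1 ω - gP0 ω) ∂P)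
    (hθc : θc = ∫ ω, (gc1 ω - gc0 ω) ∂P)
    (ψ τ sT sA : ℝ)
    (hψ : ψ = ∫ ω, gP ω * (1 - gP ω) ∂P) (hψpos : 0 < ψ)
    (hτ : τ = ∫ ω, (αP ω) ^ 2 ∂P)
    (hsT : sT = (∫ ω, (gc ω - gP ω) ^ 2 ∂P) / ψ)
    (hsA : sA = 1 - (∫ ω, (αP ω) ^ 2 ∂P) / ∫ ω, (αc ω) ^ 2 ∂P)
    (v : ℝ) (hv0 : 0 ≤ v) (hv : sT * (sA / (1 - sA)) ≤ v) :
    θP - Real.sqrt (v * ψ * τ) ≤ θc ∧ θc ≤ θP + Real.sqrt (v * ψ * τ) := by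
  -- σ-algebra bookkeeping
  have h𝒢 : 𝒢 ≤ m0 := h𝒢ℋ.trans hℋ
  have hmA0 : MeasurableSpace.comap A inferInstance ≤ m0 := hA.comap_le
  set m1 := 𝒢 ⊔ MeasurableSpace.comap A inferInstance with hm1def
  set m2 := ℋ ⊔ MeasurableSpace.comap A inferInstance with hm2def
  have hm1 : m1 ≤ m0 := sup_le h𝒢 hmA0
  have hm2 : m2 ≤ m0 := sup_le hℋ hmA0
  -- positivity facts
  have hpPpos : ∀ ω, 0 < piP ω := fun ω => lt_of_lt_of_le hκ0 (hpiPlb ω)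
  have hpP1 : ∀ ω, 0 < 1 - piP ω := fun ω => by have := hpiPub ω; linarith
  have hpcpos : ∀ ω, 0 < pic ω := fun ω => lt_of_lt_of_le hκ0 (hpiclb ω)
  have hpc1 : ∀ ω, 0 < 1 - pic ω := fun ω => by have := hpicub ω; linarith
  have hκpP : ∀ ω, κ ≤ 1 - piP ω := fun ω => by have := hpiPub ω; linarith
  have hκpc : ∀ ω, κ ≤ 1 - pic ω := fun ω => by have := hpicub ω; linarith
  have hA01' : ∀ ω, 0 ≤ A ω ∧ A ω ≤ 1 := fun ω => by
    rcases hA01 ω with h | h <;> rw [h] <;> norm_num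
  have hAm0 : Measurable[m0] A := hA
  -- measurability
  have hAm1 : Measurable[m1] A := (Measurable.of_comap_le le_rfl).mono le_sup_right le_rfl
  have hpiPm0 : Measurable[m0] piP := hpiPmeas.mono h𝒢 le_rfl
  have hpicm0 : Measurable[m0] pic := hpicmeas.mono hℋ le_rfl
  have hαPm1 : Measurable[m1] αP := by
    rw [hαP]
    exact (hAm1.div (hpiPmeas.mono le_sup_left le_rfl)).sub
      ((measurable_const.sub hAm1).div
        (measurable_const.sub (hpiPmeas.mono le_sup_left le_rfl)))
  have hαPm2 : Measurable[m2] αP := hαPm1.mono (sup_le_sup_right h𝒢ℋ _) le_rfl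
  have hαPm0 : Measurable[m0] αP := hαPm1.mono hm1 le_rfl
  have hαcm0 : Measurable[m0] αc := by
    rw [hαc]
    exact (hAm0.div hpicm0).sub ((measurable_const.sub hAm0).div (measurable_const.sub hpicm0))
  have hgPm0 : Measurable[m0] gP := by
    rw [hgP]
    exact (hAm0.mul (hgP1meas.mono h𝒢 le_rfl)).add
      ((measurable_const.sub hAm0).mul (hgP0meas.mono h𝒢 le_rfl))
  have hgcm0 : Measurable[m0] gc := by
    rw [hgc]
    exact (hAm0.mul (hgc1meas.mono hℋ le_rfl)).add
      ((measurable_const.sub hAm0).mul (hgc0meas.mono hℋ le_rfl))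
  have hXmH : Measurable[m0] X := by
    rw [hX]; exact measurable_const.indicator hB
  have hXm : Measurable[m0] X := hXmH
  have hXb : ∀ ω, 0 ≤ X ω ∧ X ω ≤ 1 := by
    intro ω; rw [hX]; by_cases h : ω ∈ B <;> simp [h]
  -- integrability helpers
  have bddInt : ∀ (f : Ω → ℝ) (C : ℝ), Measurable[m0] f → (∀ ω, |f ω| ≤ C) →
      Integrable f P := by
    intro f C hf hbd
    exact Integrable.mono' (integrable_const C) hf.aestronglyMeasurable
      (ae_of_all _ fun ω => by rw [Real.norm_eq_abs]; exact hbd ω)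
  have hXint : Integrable X P :=
    bddInt X 1 hXm fun ω => by rw [abs_of_nonneg (hXb ω).1]; exact (hXb ω).2
  have hAint : Integrable A P :=
    bddInt A 1 hAm0 fun ω => by rw [abs_of_nonneg (hA01' ω).1]; exact (hA01' ω).2
  -- bounded-times-integrable
  have intBddMul : ∀ (h g : Ω → ℝ) (C : ℝ), Measurable[m0] h → (∀ ω, |h ω| ≤ C) →
      Integrable g P → Integrable (fun ω => h ω * g ω) P := by
    intro h g C hh hb hg
    exact hg.bdd_mul (c := C) hh.aestronglyMeasurable
      (ae_of_all _ fun ω => by rw [Real.norm_eq_abs]; exact hb ω)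
  have intMulBdd : ∀ (g h : Ω → ℝ) (C : ℝ), Integrable g P → Measurable[m0] h →
      (∀ ω, |h ω| ≤ C) → Integrable (fun ω => g ω * h ω) P := by
    intro g h C hg hh hb
    exact (intBddMul h g C hh hb hg).congr (ae_of_all _ fun ω => mul_comm _ _)
  have intDiv : ∀ (g d : Ω → ℝ) (c : ℝ), 0 < c → Integrable g P → Measurable[m0] d →
      (∀ ω, c ≤ d ω) → Integrable (fun ω => g ω / d ω) P := by
    intro g d c hc hg hd hlb
    have h1 : Integrable (fun ω => (d ω)⁻¹ * g ω) P := by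
      refine hg.bdd_mul (c := c⁻¹) hd.inv.aestronglyMeasurable (ae_of_all _ fun ω => ?_)
      have h0 : 0 < d ω := lt_of_lt_of_le hc (hlb ω)
      rw [Real.norm_eq_abs, abs_of_pos (inv_pos.mpr h0)]
      exact inv_anti₀ hc (hlb ω)
    exact h1.congr (ae_of_all _ fun ω => inv_mul_eq_div _ _)
  -- bounds on αP, αc
  have hαPb : ∀ ω, |αP ω| ≤ 2 / κ := by
    intro ω
    rw [hαP]
    have e1 : |A ω / piP ω| ≤ 1 / κ := by
      rw [abs_of_nonneg (div_nonneg (hA01' ω).1 (hpPpos ω).le)]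
      exact div_le_div₀ zero_le_one (hA01' ω).2 hκ0 (hpiPlb ω)
    have e2 : |(1 - A ω) / (1 - piP ω)| ≤ 1 / κ := by
      rw [abs_of_nonneg (div_nonneg (by linarith [(hA01' ω).2]) (hpP1 ω).le)]
      exact div_le_div₀ zero_le_one (by linarith [(hA01' ω).1]) hκ0 (hκpP ω)
    calc |A ω / piP ω - (1 - A ω) / (1 - piP ω)|
        ≤ |A ω / piP ω| + |(1 - A ω) / (1 - piP ω)| := abs_sub _ _
      _ ≤ 1 / κ + 1 / κ := add_le_add e1 e2
      _ = 2 / κ := by ring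
  have hαcb : ∀ ω, |αc ω| ≤ 2 / κ := by
    intro ω
    rw [hαc]
    have e1 : |A ω / pic ω| ≤ 1 / κ := by
      rw [abs_of_nonneg (div_nonneg (hA01' ω).1 (hpcpos ω).le)]
      exact div_le_div₀ zero_le_one (hA01' ω).2 hκ0 (hpiclb ω)
    have e2 : |(1 - A ω) / (1 - pic ω)| ≤ 1 / κ := by
      rw [abs_of_nonneg (div_nonneg (by linarith [(hA01' ω).2]) (hpc1 ω).le)]
      exact div_le_div₀ zero_le_one (by linarith [(hA01' ω).1]) hκ0 (hκpc ω)
    calc |A ω / pic ω - (1 - A ω) / (1 - pic ω)|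
        ≤ |A ω / pic ω| + |(1 - A ω) / (1 - pic ω)| := abs_sub _ _
      _ ≤ 1 / κ + 1 / κ := add_le_add e1 e2
      _ = 2 / κ := by ring
  have hAb1 : ∀ ω, |A ω| ≤ 1 := fun ω => by
    rw [abs_of_nonneg (hA01' ω).1]; exact (hA01' ω).2
  have h1Ab1 : ∀ ω, |1 - A ω| ≤ 1 := fun ω => by
    rw [abs_of_nonneg (by linarith [(hA01' ω).2])]; linarith [(hA01' ω).1]
  -- integrabilities
  have hgPint : Integrable gP P := by
    rw [hgP]
    exact (intBddMul A gP1 1 hAm0 hAb1 hgP1int).add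
      (intBddMul (fun ω => 1 - A ω) gP0 1 (measurable_const.sub hAm0) h1Ab1 hgP0int)
  have hgcint : Integrable gc P := by
    rw [hgc]
    exact (intBddMul A gc1 1 hAm0 hAb1 hgc1int).add
      (intBddMul (fun ω => 1 - A ω) gc0 1 (measurable_const.sub hAm0) h1Ab1 hgc0int)
  have hαP2int : Integrable (fun ω => αP ω ^ 2) P := by
    refine bddInt _ ((2 / κ) ^ 2) (hαPm0.pow_const 2) fun ω => ?_
    rw [abs_pow]
    exact pow_le_pow_left₀ (abs_nonneg _) (hαPb ω) 2
  have hαc2int : Integrable (fun ω => αc ω ^ 2) P := by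
    refine bddInt _ ((2 / κ) ^ 2) (hαcm0.pow_const 2) fun ω => ?_
    rw [abs_pow]
    exact pow_le_pow_left₀ (abs_nonneg _) (hαcb ω) 2
  have hαcαPint : Integrable (fun ω => αc ω * αP ω) P :=
    intMulBdd αc αP (2 / κ) (bddInt αc (2 / κ) hαcm0 hαcb) hαPm0 hαPb
  -- conditional expectation steps for A given 𝒢 resp. ℋ
  have stepG : ∀ f : Ω → ℝ, Measurable[𝒢] f → Integrable f P →
      (∫ ω, f ω * A ω ∂P = ∫ ω, f ω * piP ω ∂P ∧
       ∫ ω, f ω * (1 - A ω) ∂P = ∫ ω, f ω * (1 - piP ω) ∂P) := by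
    intro f hf hfint
    have hfA : Integrable (fun ω => f ω * A ω) P := intMulBdd f A 1 hfint hAm0 hAb1
    have hfπ : Integrable (fun ω => f ω * piP ω) P :=
      intMulBdd f piP 1 hfint hpiPm0 fun ω => by
        rw [abs_of_pos (hpPpos ω)]; linarith [hpiPub ω, hκ0]
    exact ⟨int_A_mul h𝒢 P hpiPver hAint hf.stronglyMeasurable hfA,
      int_oneSubA_mul h𝒢 P hpiPver hAint hf.stronglyMeasurable hfint hfA hfπ⟩
  have stepH : ∀ f : Ω → ℝ, Measurable[ℋ] f → Integrable f P →
      (∫ ω, f ω * A ω ∂P = ∫ ω, f ω * pic ω ∂P ∧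
       ∫ ω, f ω * (1 - A ω) ∂P = ∫ ω, f ω * (1 - pic ω) ∂P) := by
    intro f hf hfint
    have hfA : Integrable (fun ω => f ω * A ω) P := intMulBdd f A 1 hfint hAm0 hAb1
    have hfπ : Integrable (fun ω => f ω * pic ω) P :=
      intMulBdd f pic 1 hfint hpicm0 fun ω => by
        rw [abs_of_pos (hpcpos ω)]; linarith [hpicub ω, hκ0]
    exact ⟨int_A_mul hℋ P hpicver hAint hf.stronglyMeasurable hfA,
      int_oneSubA_mul hℋ P hpicver hAint hf.stronglyMeasurable hfint hfA hfπ⟩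
  -- cancellation
  have cα : ∀ (g d : Ω → ℝ), (∀ ω, 0 < d ω) →
      ∫ ω, g ω / d ω * d ω ∂P = ∫ ω, g ω ∂P := by
    intro g d hd
    exact integral_congr_ae (ae_of_all _ fun ω => div_mul_cancel₀ _ (hd ω).ne')
  -- I1 : ∫ αP·gP = θP
  have hI1 : ∫ ω, αP ω * gP ω ∂P = θP := by
    have e : ∀ ω, αP ω * gP ω
        = gP1 ω / piP ω * A ω - gP0 ω / (1 - piP ω) * (1 - A ω) := by
      intro ω
      rcases hA01 ω with h | h <;> simp [hαP, hgP, h] <;> ring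
    have if1 : Integrable (fun ω => gP1 ω / piP ω) P :=
      intDiv gP1 piP κ hκ0 hgP1int hpiPm0 hpiPlb
    have if0 : Integrable (fun ω => gP0 ω / (1 - piP ω)) P :=
      intDiv gP0 _ κ hκ0 hgP0int (measurable_const.sub hpiPm0) hκpP
    have i1 : Integrable (fun ω => gP1 ω / piP ω * A ω) P := intMulBdd _ A 1 if1 hAm0 hAb1
    have i2 : Integrable (fun ω => gP0 ω / (1 - piP ω) * (1 - A ω)) P :=
      intMulBdd _ _ 1 if0 (measurable_const.sub hAm0) h1Ab1
    calc ∫ ω, αP ω * gP ω ∂P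
        = ∫ ω, (gP1 ω / piP ω * A ω - gP0 ω / (1 - piP ω) * (1 - A ω)) ∂P :=
          integral_congr_ae (ae_of_all _ e)
      _ = (∫ ω, gP1 ω / piP ω * A ω ∂P)
            - ∫ ω, gP0 ω / (1 - piP ω) * (1 - A ω) ∂P := integral_sub i1 i2
      _ = (∫ ω, gP1 ω / piP ω * piP ω ∂P)
            - ∫ ω, gP0 ω / (1 - piP ω) * (1 - piP ω) ∂P := by
          rw [(stepG _ (by exact (hgP1meas.div hpiPmeas)) if1).1,
            (stepG _ (by exact (hgP0meas.div (measurable_const.sub hpiPmeas))) if0).2]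
      _ = (∫ ω, gP1 ω ∂P) - ∫ ω, gP0 ω ∂P := by rw [cα gP1 piP hpPpos, cα gP0 _ hpP1]
      _ = θP := by rw [hθP, integral_sub hgP1int hgP0int]
  -- I3 : ∫ αc·gP = θP
  have hI3 : ∫ ω, αc ω * gP ω ∂P = θP := by
    have e : ∀ ω, αc ω * gP ω
        = gP1 ω / pic ω * A ω - gP0 ω / (1 - pic ω) * (1 - A ω) := by
      intro ω
      rcases hA01 ω with h | h <;> simp [hαc, hgP, h] <;> ring
    have if1 : Integrable (fun ω => gP1 ω / pic ω) P :=
      intDiv gP1 pic κ hκ0 hgP1int hpicm0 hpiclb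
    have if0 : Integrable (fun ω => gP0 ω / (1 - pic ω)) P :=
      intDiv gP0 _ κ hκ0 hgP0int (measurable_const.sub hpicm0) hκpc
    have i1 : Integrable (fun ω => gP1 ω / pic ω * A ω) P := intMulBdd _ A 1 if1 hAm0 hAb1
    have i2 : Integrable (fun ω => gP0 ω / (1 - pic ω) * (1 - A ω)) P :=
      intMulBdd _ _ 1 if0 (measurable_const.sub hAm0) h1Ab1
    calc ∫ ω, αc ω * gP ω ∂P
        = ∫ ω, (gP1 ω / pic ω * A ω - gP0 ω / (1 - pic ω) * (1 - A ω)) ∂P :=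
          integral_congr_ae (ae_of_all _ e)
      _ = (∫ ω, gP1 ω / pic ω * A ω ∂P)
            - ∫ ω, gP0 ω / (1 - pic ω) * (1 - A ω) ∂P := integral_sub i1 i2
      _ = (∫ ω, gP1 ω / pic ω * pic ω ∂P)
            - ∫ ω, gP0 ω / (1 - pic ω) * (1 - pic ω) ∂P := by
          rw [(stepH _ (by exact ((hgP1meas.mono h𝒢ℋ le_rfl).div hpicmeas)) if1).1,
            (stepH _ (by exact ((hgP0meas.mono h𝒢ℋ le_rfl).div (measurable_const.sub hpicmeas))) if0).2]
      _ = (∫ ω, gP1 ω ∂P) - ∫ ω, gP0 ω ∂P := by rw [cα gP1 pic hpcpos, cα gP0 _ hpc1]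
      _ = θP := by rw [hθP, integral_sub hgP1int hgP0int]
  -- I2 : ∫ αc·gc = θc
  have hI2 : ∫ ω, αc ω * gc ω ∂P = θc := by
    have e : ∀ ω, αc ω * gc ω
        = gc1 ω / pic ω * A ω - gc0 ω / (1 - pic ω) * (1 - A ω) := by
      intro ω
      rcases hA01 ω with h | h <;> simp [hαc, hgc, h] <;> ring
    have if1 : Integrable (fun ω => gc1 ω / pic ω) P :=
      intDiv gc1 pic κ hκ0 hgc1int hpicm0 hpiclb
    have if0 : Integrable (fun ω => gc0 ω / (1 - pic ω)) P :=
      intDiv gc0 _ κ hκ0 hgc0int (measurable_const.sub hpicm0) hκpc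
    have i1 : Integrable (fun ω => gc1 ω / pic ω * A ω) P := intMulBdd _ A 1 if1 hAm0 hAb1
    have i2 : Integrable (fun ω => gc0 ω / (1 - pic ω) * (1 - A ω)) P :=
      intMulBdd _ _ 1 if0 (measurable_const.sub hAm0) h1Ab1
    calc ∫ ω, αc ω * gc ω ∂P
        = ∫ ω, (gc1 ω / pic ω * A ω - gc0 ω / (1 - pic ω) * (1 - A ω)) ∂P :=
          integral_congr_ae (ae_of_all _ e)
      _ = (∫ ω, gc1 ω / pic ω * A ω ∂P)
            - ∫ ω, gc0 ω / (1 - pic ω) * (1 - A ω) ∂P := integral_sub i1 i2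
      _ = (∫ ω, gc1 ω / pic ω * pic ω ∂P)
            - ∫ ω, gc0 ω / (1 - pic ω) * (1 - pic ω) ∂P := by
          rw [(stepH _ (by exact (hgc1meas.div hpicmeas)) if1).1,
            (stepH _ (by exact (hgc0meas.div (measurable_const.sub hpicmeas))) if0).2]
      _ = (∫ ω, gc1 ω ∂P) - ∫ ω, gc0 ω ∂P := by rw [cα gc1 pic hpcpos, cα gc0 _ hpc1]
      _ = θc := by rw [hθc, integral_sub hgc1int hgc0int]
  -- I4 : ∫ αP·gc = ∫ αP·gP
  have hI4 : ∫ ω, αP ω * gc ω ∂P = ∫ ω, αP ω * gP ω ∂P := by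
    have hαX : Integrable (fun ω => αP ω * X ω) P := intBddMul αP X (2 / κ) hαPm0 hαPb hXint
    calc ∫ ω, αP ω * gc ω ∂P
        = ∫ ω, αP ω * (P[X|m2]) ω ∂P := integral_congr_ae (by
          filter_upwards [hgcver] with ω h; rw [h])
      _ = ∫ ω, αP ω * X ω ∂P := int_mul_condexp hm2 P hαPm2.stronglyMeasurable hαX hXint
      _ = ∫ ω, αP ω * (P[X|m1]) ω ∂P :=
          (int_mul_condexp hm1 P hαPm1.stronglyMeasurable hαX hXint).symm
      _ = ∫ ω, αP ω * gP ω ∂P := integral_congr_ae (by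
          filter_upwards [hgPver] with ω h; rw [h])
  -- J : ∫ αc·αP = ∫ αP²
  have hJτ : ∫ ω, αc ω * αP ω ∂P = ∫ ω, αP ω ^ 2 ∂P := by
    have e1 : ∀ ω, αc ω * αP ω
        = 1 / (pic ω * piP ω) * A ω + 1 / ((1 - pic ω) * (1 - piP ω)) * (1 - A ω) := by
      intro ω
      rcases hA01 ω with h | h <;> simp [hαc, hαP, h] <;> ring
    have e2 : ∀ ω, αP ω ^ 2
        = 1 / piP ω ^ 2 * A ω + 1 / (1 - piP ω) ^ 2 * (1 - A ω) := by
      intro ω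
      rcases hA01 ω with h | h <;> simp [hαP, h] <;> ring
    have if1 : Integrable (fun ω => 1 / (pic ω * piP ω)) P :=
      intDiv (fun _ => 1) _ (κ * κ) (mul_pos hκ0 hκ0) (integrable_const 1)
        (hpicm0.mul hpiPm0)
        (fun ω => mul_le_mul (hpiclb ω) (hpiPlb ω) hκ0.le (hpcpos ω).le)
    have if0 : Integrable (fun ω => 1 / ((1 - pic ω) * (1 - piP ω))) P :=
      intDiv (fun _ => 1) _ (κ * κ) (mul_pos hκ0 hκ0) (integrable_const 1)
        ((measurable_const.sub hpicm0).mul (measurable_const.sub hpiPm0))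
        (fun ω => mul_le_mul (hκpc ω) (hκpP ω) hκ0.le (hpc1 ω).le)
    have jf1 : Integrable (fun ω => 1 / piP ω ^ 2) P :=
      intDiv (fun _ => 1) _ (κ * κ) (mul_pos hκ0 hκ0) (integrable_const 1)
        (hpiPm0.pow_const 2)
        (fun ω => by nlinarith [hpiPlb ω, hκ0])
    have jf0 : Integrable (fun ω => 1 / (1 - piP ω) ^ 2) P :=
      intDiv (fun _ => 1) _ (κ * κ) (mul_pos hκ0 hκ0) (integrable_const 1)
        ((measurable_const.sub hpiPm0).pow_const 2)
        (fun ω => by nlinarith [hκpP ω, hκ0])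
    have i1 : Integrable (fun ω => 1 / (pic ω * piP ω) * A ω) P :=
      intMulBdd _ A 1 if1 hAm0 hAb1
    have i2 : Integrable (fun ω => 1 / ((1 - pic ω) * (1 - piP ω)) * (1 - A ω)) P :=
      intMulBdd _ _ 1 if0 (measurable_const.sub hAm0) h1Ab1
    have j1 : Integrable (fun ω => 1 / piP ω ^ 2 * A ω) P :=
      intMulBdd _ A 1 jf1 hAm0 hAb1
    have j2 : Integrable (fun ω => 1 / (1 - piP ω) ^ 2 * (1 - A ω)) P :=
      intMulBdd _ _ 1 jf0 (measurable_const.sub hAm0) h1Ab1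
    have c1 : ∫ ω, 1 / (pic ω * piP ω) * pic ω ∂P = ∫ ω, 1 / piP ω ∂P := by
      refine integral_congr_ae (ae_of_all _ fun ω => ?_)
      have h1 : pic ω ≠ 0 := (hpcpos ω).ne'
      have h2 : piP ω ≠ 0 := (hpPpos ω).ne'
      field_simp
    have c2 : ∫ ω, 1 / ((1 - pic ω) * (1 - piP ω)) * (1 - pic ω) ∂P
        = ∫ ω, 1 / (1 - piP ω) ∂P := by
      refine integral_congr_ae (ae_of_all _ fun ω => ?_)
      have h1 : (1 : ℝ) - pic ω ≠ 0 := (hpc1 ω).ne'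
      have h2 : (1 : ℝ) - piP ω ≠ 0 := (hpP1 ω).ne'
      field_simp
    have d1 : ∫ ω, 1 / piP ω ^ 2 * piP ω ∂P = ∫ ω, 1 / piP ω ∂P := by
      refine integral_congr_ae (ae_of_all _ fun ω => ?_)
      have h2 : piP ω ≠ 0 := (hpPpos ω).ne'
      field_simp
    have d2 : ∫ ω, 1 / (1 - piP ω) ^ 2 * (1 - piP ω) ∂P = ∫ ω, 1 / (1 - piP ω) ∂P := by
      refine integral_congr_ae (ae_of_all _ fun ω => ?_)
      have h2 : (1 : ℝ) - piP ω ≠ 0 := (hpP1 ω).ne'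
      field_simp
    calc ∫ ω, αc ω * αP ω ∂P
        = ∫ ω, (1 / (pic ω * piP ω) * A ω
            + 1 / ((1 - pic ω) * (1 - piP ω)) * (1 - A ω)) ∂P :=
          integral_congr_ae (ae_of_all _ e1)
      _ = (∫ ω, 1 / (pic ω * piP ω) * A ω ∂P)
            + ∫ ω, 1 / ((1 - pic ω) * (1 - piP ω)) * (1 - A ω) ∂P := integral_add i1 i2
      _ = (∫ ω, 1 / (pic ω * piP ω) * pic ω ∂P)
            + ∫ ω, 1 / ((1 - pic ω) * (1 - piP ω)) * (1 - pic ω) ∂P := by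
          rw [(stepH _ (by exact measurable_const.div (hpicmeas.mul (hpiPmeas.mono h𝒢ℋ le_rfl))) if1).1,
            (stepH _ (by exact measurable_const.div ((measurable_const.sub hpicmeas).mul
              (measurable_const.sub (hpiPmeas.mono h𝒢ℋ le_rfl)))) if0).2]
      _ = (∫ ω, 1 / piP ω ∂P) + ∫ ω, 1 / (1 - piP ω) ∂P := by rw [c1, c2]
      _ = (∫ ω, 1 / piP ω ^ 2 * piP ω ∂P)
            + ∫ ω, 1 / (1 - piP ω) ^ 2 * (1 - piP ω) ∂P := by rw [d1, d2]
      _ = (∫ ω, 1 / piP ω ^ 2 * A ω ∂P)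
            + ∫ ω, 1 / (1 - piP ω) ^ 2 * (1 - A ω) ∂P := by
          rw [(stepG _ (by exact (measurable_const.div (hpiPmeas.pow_const 2))) jf1).1,
            (stepG _ (by exact (measurable_const.div ((measurable_const.sub hpiPmeas).pow_const 2))) jf0).2]
      _ = ∫ ω, (1 / piP ω ^ 2 * A ω + 1 / (1 - piP ω) ^ 2 * (1 - A ω)) ∂P :=
          (integral_add j1 j2).symm
      _ = ∫ ω, αP ω ^ 2 ∂P := (integral_congr_ae (ae_of_all _ e2)).symm
  -- a.e. bounds on gP, gc
  have hgP01 : ∀ᵐ ω ∂P, 0 ≤ gP ω ∧ gP ω ≤ 1 := by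
    have h0 : (0 : Ω → ℝ) ≤ᵐ[P] P[X|m1] := condExp_nonneg (ae_of_all _ fun ω => (hXb ω).1)
    have h1 : P[X|m1] ≤ᵐ[P] P[(fun _ => (1 : ℝ))|m1] :=
      condExp_mono hXint (integrable_const 1) (ae_of_all _ fun ω => (hXb ω).2)
    have h2 := condExp_const (μ := P) hm1 (1 : ℝ)
    filter_upwards [h0, h1, hgPver] with ω k0 k1 kv
    have k2 : (P[(fun _ => (1 : ℝ))|m1]) ω = 1 := by rw [h2]
    rw [kv]
    exact ⟨k0, k1.trans_eq k2⟩
  have hgc01 : ∀ᵐ ω ∂P, 0 ≤ gc ω ∧ gc ω ≤ 1 := by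
    have h0 : (0 : Ω → ℝ) ≤ᵐ[P] P[X|m2] := condExp_nonneg (ae_of_all _ fun ω => (hXb ω).1)
    have h1 : P[X|m2] ≤ᵐ[P] P[(fun _ => (1 : ℝ))|m2] :=
      condExp_mono hXint (integrable_const 1) (ae_of_all _ fun ω => (hXb ω).2)
    have h2 := condExp_const (μ := P) hm2 (1 : ℝ)
    filter_upwards [h0, h1, hgcver] with ω k0 k1 kv
    have k2 : (P[(fun _ => (1 : ℝ))|m2]) ω = 1 := by rw [h2]
    rw [kv]
    exact ⟨k0, k1.trans_eq k2⟩
  -- integrability of squares / products for Cauchy–Schwarz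
  have hub : ∀ ω, |αc ω - αP ω| ≤ 4 / κ := by
    intro ω
    calc |αc ω - αP ω| ≤ |αc ω| + |αP ω| := abs_sub _ _
      _ ≤ 2 / κ + 2 / κ := add_le_add (hαcb ω) (hαPb ω)
      _ = 4 / κ := by ring
  have hu2int : Integrable (fun ω => (αc ω - αP ω) ^ 2) P := by
    refine bddInt _ ((4 / κ) ^ 2) ((hαcm0.sub hαPm0).pow_const 2) fun ω => ?_
    rw [abs_pow]
    exact pow_le_pow_left₀ (abs_nonneg _) (hub ω) 2
  have hw2int : Integrable (fun ω => (gc ω - gP ω) ^ 2) P := by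
    refine Integrable.mono' (integrable_const 4)
      ((hgcm0.sub hgPm0).pow_const 2).aestronglyMeasurable ?_
    filter_upwards [hgP01, hgc01] with ω h1 h2
    rw [Real.norm_eq_abs, abs_pow]
    have h3 : |gc ω - gP ω| ≤ 2 := abs_le.mpr ⟨by linarith [h1.2, h2.1], by linarith [h1.1, h2.2]⟩
    calc |gc ω - gP ω| ^ 2 ≤ 2 ^ 2 := pow_le_pow_left₀ (abs_nonneg _) h3 2
      _ = 4 := by norm_num
  have huwint : Integrable (fun ω => (αc ω - αP ω) * (gc ω - gP ω)) P :=
    intBddMul _ _ (4 / κ) (hαcm0.sub hαPm0) hub (hgcint.sub hgPint)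
  -- θc − θP = ∫ (αc−αP)(gc−gP)
  have iacgc : Integrable (fun ω => αc ω * gc ω) P := intBddMul αc gc (2 / κ) hαcm0 hαcb hgcint
  have iacgP : Integrable (fun ω => αc ω * gP ω) P := intBddMul αc gP (2 / κ) hαcm0 hαcb hgPint
  have iaPgc : Integrable (fun ω => αP ω * gc ω) P := intBddMul αP gc (2 / κ) hαPm0 hαPb hgcint
  have iaPgP : Integrable (fun ω => αP ω * gP ω) P := intBddMul αP gP (2 / κ) hαPm0 hαPb hgPint
  have hbint : ∫ ω, (αc ω - αP ω) * (gc ω - gP ω) ∂P = θc - θP := by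
    calc ∫ ω, (αc ω - αP ω) * (gc ω - gP ω) ∂P
        = ∫ ω, ((αc ω * gc ω - αc ω * gP ω) - (αP ω * gc ω - αP ω * gP ω)) ∂P :=
          integral_congr_ae (ae_of_all _ fun ω => by ring)
      _ = (∫ ω, (αc ω * gc ω - αc ω * gP ω) ∂P)
            - ∫ ω, (αP ω * gc ω - αP ω * gP ω) ∂P :=
          integral_sub (iacgc.sub iacgP) (iaPgc.sub iaPgP)
      _ = ((∫ ω, αc ω * gc ω ∂P) - ∫ ω, αc ω * gP ω ∂P)
            - ((∫ ω, αP ω * gc ω ∂P) - ∫ ω, αP ω * gP ω ∂P) := by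
          rw [integral_sub iacgc iacgP, integral_sub iaPgc iaPgP]
      _ = θc - θP := by rw [hI4, hI1, hI2, hI3]; ring
  -- ∫ (αc−αP)² = ∫ αc² − ∫ αP²
  have hu2eq : ∫ ω, (αc ω - αP ω) ^ 2 ∂P
      = (∫ ω, αc ω ^ 2 ∂P) - ∫ ω, αP ω ^ 2 ∂P := by
    have e : ∀ ω, (αc ω - αP ω) ^ 2
        = (αc ω ^ 2 - 2 * (αc ω * αP ω)) + αP ω ^ 2 := fun ω => by ring
    calc ∫ ω, (αc ω - αP ω) ^ 2 ∂P
        = ∫ ω, ((αc ω ^ 2 - 2 * (αc ω * αP ω)) + αP ω ^ 2) ∂P :=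
          integral_congr_ae (ae_of_all _ e)
      _ = (∫ ω, (αc ω ^ 2 - 2 * (αc ω * αP ω)) ∂P) + ∫ ω, αP ω ^ 2 ∂P :=
          integral_add (hαc2int.sub (hαcαPint.const_mul 2)) hαP2int
      _ = ((∫ ω, αc ω ^ 2 ∂P) - ∫ ω, 2 * (αc ω * αP ω) ∂P) + ∫ ω, αP ω ^ 2 ∂P := by
          rw [integral_sub hαc2int (hαcαPint.const_mul 2)]
      _ = ((∫ ω, αc ω ^ 2 ∂P) - 2 * ∫ ω, αc ω * αP ω ∂P) + ∫ ω, αP ω ^ 2 ∂P := by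
          rw [integral_const_mul]
      _ = (∫ ω, αc ω ^ 2 ∂P) - ∫ ω, αP ω ^ 2 ∂P := by rw [hJτ]; ring
  -- τ ≥ 1
  have hτ1 : (1 : ℝ) ≤ τ := by
    rw [hτ]
    have h1 : (1 : ℝ) = ∫ _ω, (1 : ℝ) ∂P := by simp
    rw [h1]
    refine integral_mono (integrable_const 1) hαP2int fun ω => ?_
    show (1 : ℝ) ≤ αP ω ^ 2
    rcases hA01 ω with h | h
    · have e : αP ω = -(1 / (1 - piP ω)) := by simp [hαP, h]
      rw [e, neg_sq, div_pow, one_pow, le_div_iff₀ (pow_pos (hpP1 ω) 2)]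
      nlinarith [hpPpos ω, hpP1 ω]
    · have e : αP ω = 1 / piP ω := by simp [hαP, h]
      rw [e, div_pow, one_pow, le_div_iff₀ (pow_pos (hpPpos ω) 2)]
      nlinarith [hpPpos ω, hpiPub ω, hκ0]
  have hτpos : 0 < τ := by linarith
  have ha0 : 0 ≤ ∫ ω, (αc ω - αP ω) ^ 2 ∂P := integral_nonneg fun ω => sq_nonneg _
  have hIg0 : 0 ≤ ∫ ω, (gc ω - gP ω) ^ 2 ∂P := integral_nonneg fun ω => sq_nonneg _
  have hIceq : ∫ ω, αc ω ^ 2 ∂P = τ + ∫ ω, (αc ω - αP ω) ^ 2 ∂P := by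
    rw [hτ]; linarith [hu2eq]
  -- sA / (1 − sA) = (∫ u²) / τ
  have hfrac : sA / (1 - sA) = (∫ ω, (αc ω - αP ω) ^ 2 ∂P) / τ :=
    frac_lemma hτpos ha0 (by rw [hsA, ← hτ, hIceq])
  -- main inequality
  have hkey : (∫ ω, (gc ω - gP ω) ^ 2 ∂P) * (∫ ω, (αc ω - αP ω) ^ 2 ∂P) ≤ v * ψ * τ := by
    have h := hv
    rw [hsT, hfrac] at h
    exact key_lemma hψpos hτpos h
  have hcs := cs_int P hu2int hw2int huwint
  have hsq : (θc - θP) ^ 2 ≤ v * ψ * τ := by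
    calc (θc - θP) ^ 2 = (∫ ω, (αc ω - αP ω) * (gc ω - gP ω) ∂P) ^ 2 := by rw [hbint]
      _ ≤ (∫ ω, (αc ω - αP ω) ^ 2 ∂P) * ∫ ω, (gc ω - gP ω) ^ 2 ∂P := hcs
      _ = (∫ ω, (gc ω - gP ω) ^ 2 ∂P) * ∫ ω, (αc ω - αP ω) ^ 2 ∂P := mul_comm _ _
      _ ≤ v * ψ * τ := hkey
  have habs : |θc - θP| ≤ Real.sqrt (v * ψ * τ) := Real.abs_le_sqrt hsq
  obtain ⟨hl, hr⟩ := abs_le.mp habs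
  exact ⟨by linarith, by linarith⟩
end

section
/- Second-order drift bound (used in the proofs of Theorems 1 and 2): let η ≥ 2, let 𝒢 ⊆ ℱ be a sub-σ-algebra, let p be a 𝒢-measurable version of E[A | 𝒢] with 1/η ≤ p ≤ 1 − 1/η everywhere, and let p̂ : Ω → ℝ be 𝒢-measurable with 1/η ≤ p̂ ≤ 1 − 1/η everywhere. Then |E[D_{p̂} − D_p]| ≤ 2·η⁶·E[(p̂ − p)²]. -/
set_option maxHeartbeats 1000000

open MeasureTheory ProbabilityTheory

private lemma bnd_lb {η x : ℝ} (hη : 2 ≤ η) (h1 : 1/η ≤ x) (h2 : x ≤ 1 - 1/η) :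
    1/η^2 ≤ x * (1 - x) := by
  have hη0 : 0 < η := by linarith
  have h3 : 1/η ≤ 1 - x := by linarith
  have h4 : 0 < 1/η := by positivity
  calc 1/η^2 = (1/η) * (1/η) := by ring
    _ ≤ x * (1 - x) := mul_le_mul h1 h3 (le_of_lt h4) (by linarith)

private lemma frac_bnd {n den N D : ℝ} (hn : |n| ≤ N) (hD : 0 < D) (hden : D ≤ den) :
    |n / den| ≤ N / D := by
  rw [abs_div]
  exact div_le_div₀ (le_trans (abs_nonneg n) hn) hn hD (le_trans hden (le_abs_self den))

private lemma key_ineq {η p q : ℝ} (hη : 2 ≤ η) (hp1 : 1/η ≤ p) (hp2 : p ≤ 1 - 1/η)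
    (hq1 : 1/η ≤ q) (hq2 : q ≤ 1 - 1/η) :
    |(2/(q*(1-q)) - q^2/(q^2*(1-q)^2) - 2/(p*(1-p)) + p^2/(p^2*(1-p)^2))
      + p * ((1-2*p)/(p^2*(1-p)^2) - (1-2*q)/(q^2*(1-q)^2))| ≤ 2*η^6*(q-p)^2 := by
  have hη0 : 0 < η := by linarith
  have hinv : 0 < 1/η := by positivity
  have hp0 : 0 < p := lt_of_lt_of_le hinv hp1
  have hq0 : 0 < q := lt_of_lt_of_le hinv hq1
  have hp1' : p < 1 := by linarith
  have hq1' : q < 1 := by linarith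
  have ha : 1/η^2 ≤ p * (1-p) := bnd_lb hη hp1 hp2
  have hb : 1/η^2 ≤ q * (1-q) := bnd_lb hη hq1 hq2
  have ha0 : 0 < p * (1-p) := mul_pos hp0 (by linarith)
  have hb0 : 0 < q * (1-q) := mul_pos hq0 (by linarith)
  have heq : (2/(q*(1-q)) - q^2/(q^2*(1-q)^2) - 2/(p*(1-p)) + p^2/(p^2*(1-p)^2))
      + p * ((1-2*p)/(p^2*(1-p)^2) - (1-2*q)/(q^2*(1-q)^2))
      = -((p*(1-p) - q*(1-q))^2/((p*(1-p))*(q*(1-q))^2) + (p-q)^2/(q*(1-q))^2) := by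
    have h1 : p ≠ 0 := hp0.ne'
    have h2 : (1-p) ≠ 0 := by linarith
    have h3 : q ≠ 0 := hq0.ne'
    have h4 : (1-q) ≠ 0 := by linarith
    field_simp
    ring
  rw [heq, abs_neg, abs_of_nonneg (add_nonneg
    (div_nonneg (sq_nonneg _) (le_of_lt (mul_pos ha0 (pow_pos hb0 2))))
    (div_nonneg (sq_nonneg _) (le_of_lt (pow_pos hb0 2))))]
  have hη6 : (0:ℝ) < η^6 := by positivity
  have hab2 : 1/η^6 ≤ (p*(1-p)) * (q*(1-q))^2 := by
    calc 1/η^6 = (1/η^2)*(1/η^2)^2 := by ring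
      _ ≤ (p*(1-p)) * (q*(1-q))^2 :=
        mul_le_mul ha (pow_le_pow_left₀ (by positivity) hb 2) (by positivity) (le_of_lt ha0)
  have h1 : 1 ≤ (p*(1-p)) * (q*(1-q))^2 * η^6 := (div_le_iff₀ hη6).mp hab2
  have hsq : (p*(1-p) - q*(1-q))^2 ≤ (q-p)^2 := by
    have h2 : (1-(p+q))^2 ≤ 1 := by nlinarith
    calc (p*(1-p) - q*(1-q))^2 = (p-q)^2 * (1-(p+q))^2 := by ring
      _ ≤ (p-q)^2 * 1 := by nlinarith [sq_nonneg (p-q)]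
      _ = (q-p)^2 := by ring
  have t1 : (p*(1-p) - q*(1-q))^2/((p*(1-p))*(q*(1-q))^2) ≤ η^6 * (q-p)^2 := by
    rw [div_le_iff₀ (mul_pos ha0 (pow_pos hb0 2))]
    have h2 : 0 ≤ (q-p)^2 * ((p*(1-p)) * (q*(1-q))^2 * η^6 - 1) :=
      mul_nonneg (sq_nonneg _) (by linarith)
    linarith [hsq, h2]
  have hb2 : 1/η^4 ≤ (q*(1-q))^2 := by
    calc 1/η^4 = (1/η^2)^2 := by ring
      _ ≤ (q*(1-q))^2 := pow_le_pow_left₀ (by positivity) hb 2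
  have h3 : 1 ≤ (q*(1-q))^2 * η^4 := (div_le_iff₀ (by positivity)).mp hb2
  have h4 : 1 ≤ (q*(1-q))^2 * η^6 := by nlinarith [sq_nonneg (q*(1-q)), sq_nonneg η]
  have t2 : (p-q)^2/(q*(1-q))^2 ≤ η^6 * (q-p)^2 := by
    rw [div_le_iff₀ (pow_pos hb0 2)]
    have h2 : 0 ≤ (q-p)^2 * ((q*(1-q))^2 * η^6 - 1) :=
      mul_nonneg (sq_nonneg _) (by linarith)
    linarith [h2]
  calc (p*(1-p) - q*(1-q))^2/((p*(1-p))*(q*(1-q))^2) + (p-q)^2/(q*(1-q))^2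
      ≤ η^6 * (q-p)^2 + η^6 * (q-p)^2 := add_le_add t1 t2
    _ = 2*η^6*(q-p)^2 := by ring

private lemma integrable_of_bdd {Ω : Type*} {m : MeasurableSpace Ω} {P : MeasureTheory.Measure Ω}
    [MeasureTheory.IsFiniteMeasure P] {f : Ω → ℝ} {C : ℝ}
    (hf : Measurable f) (h : ∀ ω, ‖f ω‖ ≤ C) : MeasureTheory.Integrable f P :=
  ⟨hf.aestronglyMeasurable, MeasureTheory.HasFiniteIntegral.of_bounded (MeasureTheory.ae_of_all _ h)⟩

/-- Second-order drift bound (used in the proofs of Theorems 1 and 2): for `η ≥ 2`, `p` a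
`𝒢`-measurable version of `E[A | 𝒢]` and `p̂` a `𝒢`-measurable function, both with values in
`[1/η, 1 − 1/η]`, `|E[D_{p̂} − D_p]| ≤ 2·η⁶·E[(p̂ − p)²]`. -/
theorem second_order_drift_bound
    {Ω : Type*} (𝒢 : MeasurableSpace Ω) {m0 : MeasurableSpace Ω} (P : Measure Ω) [IsProbabilityMeasure P]
    (h𝒢 : 𝒢 ≤ m0)
    (A : Ω → ℝ) (hA : Measurable A) (hA01 : ∀ ω, A ω = 0 ∨ A ω = 1)
    (η : ℝ) (hη : 2 ≤ η)
    (p phat : Ω → ℝ) (hp : Measurable[𝒢] p) (hphat : Measurable[𝒢] phat)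
    (hpver : p =ᵐ[P] P[A | 𝒢])
    (hplb : ∀ ω, 1 / η ≤ p ω) (hpub : ∀ ω, p ω ≤ 1 - 1 / η)
    (hphatlb : ∀ ω, 1 / η ≤ phat ω) (hphatub : ∀ ω, phat ω ≤ 1 - 1 / η)
    (Dp Dphat : Ω → ℝ)
    (hDp : Dp = fun ω =>
      2 / (p ω * (1 - p ω)) - (A ω - p ω) ^ 2 / ((p ω) ^ 2 * (1 - p ω) ^ 2))
    (hDphat : Dphat = fun ω =>
      2 / (phat ω * (1 - phat ω)) - (A ω - phat ω) ^ 2 / ((phat ω) ^ 2 * (1 - phat ω) ^ 2)) :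
    |∫ ω, (Dphat ω - Dp ω) ∂P| ≤ 2 * η ^ 6 * ∫ ω, (phat ω - p ω) ^ 2 ∂P := by
  have hη0 : 0 < η := by linarith
  have hinv : 0 < 1/η := by positivity
  have hp01 : ∀ ω, 0 < p ω ∧ p ω < 1 := fun ω =>
    ⟨lt_of_lt_of_le hinv (hplb ω), by have := hpub ω; linarith⟩
  have hq01 : ∀ ω, 0 < phat ω ∧ phat ω < 1 := fun ω =>
    ⟨lt_of_lt_of_le hinv (hphatlb ω), by have := hphatub ω; linarith⟩
  have hAM : Measurable[m0] A := hA
  have hpM : Measurable[m0] p := hp.mono h𝒢 le_rfl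
  have hphatM : Measurable[m0] phat := hphat.mono h𝒢 le_rfl
  set c : Ω → ℝ := fun ω =>
    2/(phat ω*(1-phat ω)) - (phat ω)^2/((phat ω)^2*(1-phat ω)^2)
    - 2/(p ω*(1-p ω)) + (p ω)^2/((p ω)^2*(1-p ω)^2) with hc_def
  set d : Ω → ℝ := fun ω =>
    (1-2*p ω)/((p ω)^2*(1-p ω)^2) - (1-2*phat ω)/((phat ω)^2*(1-phat ω)^2) with hd_def
  -- pointwise decomposition
  have hpt : ∀ ω, Dphat ω - Dp ω = c ω + d ω * A ω := by
    intro ω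
    rcases hA01 ω with h | h <;>
      simp only [hDp, hDphat, hc_def, hd_def, h] <;> ring
  -- lower bounds for denominators
  have hpa4 : ∀ ω, 1/η^4 ≤ (p ω)^2*(1-p ω)^2 := by
    intro ω
    calc 1/η^4 = (1/η^2)^2 := by ring
      _ ≤ (p ω*(1-p ω))^2 := pow_le_pow_left₀ (by positivity) (bnd_lb hη (hplb ω) (hpub ω)) 2
      _ = (p ω)^2*(1-p ω)^2 := by ring
  have hqa4 : ∀ ω, 1/η^4 ≤ (phat ω)^2*(1-phat ω)^2 := by
    intro ω
    calc 1/η^4 = (1/η^2)^2 := by ring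
      _ ≤ (phat ω*(1-phat ω))^2 :=
          pow_le_pow_left₀ (by positivity) (bnd_lb hη (hphatlb ω) (hphatub ω)) 2
      _ = (phat ω)^2*(1-phat ω)^2 := by ring
  -- bound on d
  have hdb : ∀ ω, |d ω| ≤ 2*η^4 := by
    intro ω
    have h1 : |(1-2*p ω)/((p ω)^2*(1-p ω)^2)| ≤ 1/(1/η^4) :=
      frac_bnd (abs_le.mpr ⟨by linarith [(hp01 ω).2], by linarith [(hp01 ω).1]⟩)
        (by positivity) (hpa4 ω)
    have h2 : |(1-2*phat ω)/((phat ω)^2*(1-phat ω)^2)| ≤ 1/(1/η^4) :=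
      frac_bnd (abs_le.mpr ⟨by linarith [(hq01 ω).2], by linarith [(hq01 ω).1]⟩)
        (by positivity) (hqa4 ω)
    have h3 : (1:ℝ)/(1/η^4) = η^4 := by field_simp
    calc |d ω| ≤ |(1-2*p ω)/((p ω)^2*(1-p ω)^2)| + |(1-2*phat ω)/((phat ω)^2*(1-phat ω)^2)| :=
          abs_sub _ _
      _ ≤ 2*η^4 := by rw [h3] at h1 h2; linarith
  -- bound on c
  have hcb : ∀ ω, |c ω| ≤ 4*η^2 + 2*η^4 := by
    intro ω
    have e2 : (1:ℝ)/(1/η^2) = η^2 := by field_simp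
    have e4 : (1:ℝ)/(1/η^4) = η^4 := by field_simp
    have h1 : |2/(phat ω*(1-phat ω))| ≤ 2/(1/η^2) :=
      frac_bnd (by norm_num) (by positivity) (bnd_lb hη (hphatlb ω) (hphatub ω))
    have h2 : |(phat ω)^2/((phat ω)^2*(1-phat ω)^2)| ≤ 1/(1/η^4) :=
      frac_bnd (by rw [abs_of_nonneg (sq_nonneg _)]; nlinarith [(hq01 ω).1, (hq01 ω).2])
        (by positivity) (hqa4 ω)
    have h3 : |2/(p ω*(1-p ω))| ≤ 2/(1/η^2) :=
      frac_bnd (by norm_num) (by positivity) (bnd_lb hη (hplb ω) (hpub ω))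
    have h4 : |(p ω)^2/((p ω)^2*(1-p ω)^2)| ≤ 1/(1/η^4) :=
      frac_bnd (by rw [abs_of_nonneg (sq_nonneg _)]; nlinarith [(hp01 ω).1, (hp01 ω).2])
        (by positivity) (hpa4 ω)
    have e1 : (2:ℝ)/(1/η^2) = 2*η^2 := by field_simp
    rw [e1] at h1 h3; rw [e4] at h2 h4
    calc |c ω| ≤ |2/(phat ω*(1-phat ω)) - (phat ω)^2/((phat ω)^2*(1-phat ω)^2)
          - 2/(p ω*(1-p ω))| + |(p ω)^2/((p ω)^2*(1-p ω)^2)| := abs_add_le _ _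
      _ ≤ (|2/(phat ω*(1-phat ω)) - (phat ω)^2/((phat ω)^2*(1-phat ω)^2)|
          + |2/(p ω*(1-p ω))|) + |(p ω)^2/((p ω)^2*(1-p ω)^2)| := by
            gcongr; exact abs_sub _ _
      _ ≤ ((|2/(phat ω*(1-phat ω))| + |(phat ω)^2/((phat ω)^2*(1-phat ω)^2)|)
          + |2/(p ω*(1-p ω))|) + |(p ω)^2/((p ω)^2*(1-p ω)^2)| := by
            gcongr; exact abs_sub _ _
      _ ≤ 4*η^2 + 2*η^4 := by linarith
  -- measurability
  have hc𝒢 : Measurable[𝒢] c := by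
    apply Measurable.add
    apply Measurable.sub
    apply Measurable.sub
    · exact Measurable.div measurable_const (hphat.mul (measurable_const.sub hphat))
    · exact Measurable.div (hphat.pow_const 2)
        ((hphat.pow_const 2).mul ((measurable_const.sub hphat).pow_const 2))
    · exact Measurable.div measurable_const (hp.mul (measurable_const.sub hp))
    · exact Measurable.div (hp.pow_const 2)
        ((hp.pow_const 2).mul ((measurable_const.sub hp).pow_const 2))
  have hd𝒢 : Measurable[𝒢] d := by
    apply Measurable.sub
    · exact Measurable.div (measurable_const.sub (hp.const_mul 2))
        ((hp.pow_const 2).mul ((measurable_const.sub hp).pow_const 2))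
    · exact Measurable.div (measurable_const.sub (hphat.const_mul 2))
        ((hphat.pow_const 2).mul ((measurable_const.sub hphat).pow_const 2))
  have hcM : Measurable[m0] c := hc𝒢.mono h𝒢 le_rfl
  have hdM : Measurable[m0] d := hd𝒢.mono h𝒢 le_rfl
  -- integrability
  have hAbd : ∀ ω, ‖A ω‖ ≤ 1 := fun ω => by
    rcases hA01 ω with h | h <;> simp [h]
  have hA_int : Integrable A P := integrable_of_bdd hAM hAbd
  have int_c : Integrable c P := integrable_of_bdd hcM (fun ω => by simpa using hcb ω)
  have int_dA : Integrable (fun ω => d ω * A ω) P := by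
    refine integrable_of_bdd (C := 2*η^4) (hdM.mul hAM) (fun ω => ?_)
    calc ‖d ω * A ω‖ = |d ω| * ‖A ω‖ := by rw [norm_mul]; rfl
      _ ≤ (2*η^4) * 1 := mul_le_mul (hdb ω) (hAbd ω) (norm_nonneg _)
          (by positivity)
      _ = 2*η^4 := mul_one _
  have int_dp : Integrable (fun ω => d ω * p ω) P := by
    refine integrable_of_bdd (C := 2*η^4) (hdM.mul hpM) (fun ω => ?_)
    calc ‖d ω * p ω‖ = |d ω| * |p ω| := by rw [norm_mul]; rfl
      _ ≤ (2*η^4) * 1 := mul_le_mul (hdb ω)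
          (abs_le.mpr ⟨by linarith [(hp01 ω).1], le_of_lt (hp01 ω).2⟩)
          (abs_nonneg _) (by positivity)
      _ = 2*η^4 := mul_one _
  -- conditional expectation step
  have hcond : P[d * A | 𝒢] =ᵐ[P] d * P[A | 𝒢] :=
    condExp_stronglyMeasurable_mul_of_bound h𝒢 hd𝒢.stronglyMeasurable hA_int (2*η^4)
      (ae_of_all _ (fun ω => by simpa using hdb ω))
  have hstep : ∫ ω, d ω * A ω ∂P = ∫ ω, d ω * p ω ∂P := by
    have h2 : (d * P[A|𝒢] : Ω → ℝ) =ᵐ[P] fun ω => d ω * p ω := by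
      filter_upwards [hpver] with ω hω
      simp only [Pi.mul_apply, ← hω]
    calc ∫ ω, d ω * A ω ∂P = ∫ ω, (d * A) ω ∂P := rfl
      _ = ∫ ω, (P[d * A | 𝒢]) ω ∂P := (integral_condExp h𝒢).symm
      _ = ∫ ω, d ω * p ω ∂P := integral_congr_ae (hcond.trans h2)
  have hsplit : ∫ ω, (Dphat ω - Dp ω) ∂P = ∫ ω, (c ω + d ω * p ω) ∂P := by
    calc ∫ ω, (Dphat ω - Dp ω) ∂P = ∫ ω, (c ω + d ω * A ω) ∂P :=
          integral_congr_ae (ae_of_all _ hpt)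
      _ = (∫ ω, c ω ∂P) + ∫ ω, d ω * A ω ∂P := integral_add int_c int_dA
      _ = (∫ ω, c ω ∂P) + ∫ ω, d ω * p ω ∂P := by rw [hstep]
      _ = ∫ ω, (c ω + d ω * p ω) ∂P := (integral_add int_c int_dp).symm
  -- final bound
  have hptw : ∀ ω, |c ω + d ω * p ω| ≤ 2*η^6*(phat ω - p ω)^2 := by
    intro ω
    have hk := key_ineq hη (hplb ω) (hpub ω) (hphatlb ω) (hphatub ω)
    have heqq : c ω + d ω * p ω
        = (2/(phat ω*(1-phat ω)) - (phat ω)^2/((phat ω)^2*(1-phat ω)^2)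
            - 2/(p ω*(1-p ω)) + (p ω)^2/((p ω)^2*(1-p ω)^2))
          + p ω * ((1-2*p ω)/((p ω)^2*(1-p ω)^2)
            - (1-2*phat ω)/((phat ω)^2*(1-phat ω)^2)) := by
      simp only [hc_def, hd_def]; ring
    rw [heqq]
    exact hk
  have int_rhs : Integrable (fun ω => 2*η^6*(phat ω - p ω)^2) P := by
    refine integrable_of_bdd (C := 2*η^6) (((hphatM.sub hpM).pow_const 2).const_mul _) (fun ω => ?_)
    have h1 : (phat ω - p ω)^2 ≤ 1 := by
      nlinarith [(hp01 ω).1, (hp01 ω).2, (hq01 ω).1, (hq01 ω).2]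
    have h2 : (0:ℝ) ≤ 2*η^6*(phat ω - p ω)^2 := by positivity
    rw [Real.norm_eq_abs, abs_of_nonneg h2]
    nlinarith [pow_pos hη0 6]
  rw [hsplit]
  calc |∫ ω, (c ω + d ω * p ω) ∂P| ≤ ∫ ω, |c ω + d ω * p ω| ∂P := by
        simpa [Real.norm_eq_abs] using
          norm_integral_le_integral_norm (μ := P) (f := fun ω => c ω + d ω * p ω)
    _ ≤ ∫ ω, 2*η^6*(phat ω - p ω)^2 ∂P :=
        integral_mono (int_c.add int_dp).abs int_rhs hptw
    _ = 2*η^6 * ∫ ω, (phat ω - p ω)^2 ∂P := integral_const_mul _ _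
    _ = 2 * η ^ 6 * ∫ ω, (phat ω - p ω) ^ 2 ∂P := by ring
end
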